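/- Let c be a null Cartan curve in Minkowski 4-space and define c̄(s) = c(s) + α(s)W₁(s) + β(s)W₂(s). If the span of {W̄₁, W̄₂} at corresponding points equals the span of {W₁, W₂}, so that W̄₁ = cos θ W₁ + sin θ W₂ and W̄₂ = -sin θ W₁ + cos θ W₂, then α and β are constant functions. -/

import Mathlib

noncomputable section

/-- Minkowski inner product on ℝ⁴ with signature (-,+,+,+). -/
def mink (x y : Fin 4 → ℝ) : ℝ := -(x 0 * y 0) + x 1 * y 1 + x 2 * y 2 + x 3 * y 3

/-! Differentiating `c̄ ∘ φ = c + α W₁ + β W₂` gives `φ' L̄ = α' W₁ + β' W₂ + v` with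
`v = L + α dW₁/ds + β dW₂/ds`, which by the Frenet equations lies in the span of `L` and `N`.
Since `W₁, W₂` span the same plane as `W̄₁, W̄₂`, they are orthogonal to `L̄`, and pairing
with `W₁` and `W₂` leaves `α' = β' = 0`. -/

section Mink

variable (x y z : Fin 4 → ℝ) (r : ℝ)

lemma mink_comm : mink x y = mink y x := by
  simp only [mink]; ring

lemma mink_add_left : mink (x + y) z = mink x z + mink y z := by
  simp only [mink, Pi.add_apply]; ring

lemma mink_sub_left : mink (x - y) z = mink x z - mink y z := by
  simp only [mink, Pi.sub_apply]; ring

lemma mink_smul_left : mink (r • x) z = r * mink x z := by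
  simp only [mink, Pi.smul_apply, smul_eq_mul]; ring

lemma mink_add_right : mink x (y + z) = mink x y + mink x z := by
  simp only [mink, Pi.add_apply]; ring

lemma mink_smul_right : mink x (r • z) = r * mink x z := by
  simp only [mink, Pi.smul_apply, smul_eq_mul]; ring

end Mink

lemma mink_eq_zero_of_mink_rotate_eq_zero {v a b : Fin 4 → ℝ} (θ : ℝ)
    (h₁ : mink v (Real.cos θ • a + Real.sin θ • b) = 0)
    (h₂ : mink v (-Real.sin θ • a + Real.cos θ • b) = 0) :
    mink v a = 0 ∧ mink v b = 0 := by
  simp only [mink_add_right, mink_smul_right] at h₁ h₂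
  have hpy := Real.sin_sq_add_cos_sq θ
  constructor
  · linear_combination Real.cos θ * h₁ - Real.sin θ * h₂ - mink v a * hpy
  · linear_combination Real.sin θ * h₁ + Real.cos θ * h₂ - mink v b * hpy

lemma coeffs_eq_zero_of_mink_orthonormal {W₁ W₂ v T : Fin 4 → ℝ} {a b r : ℝ}
    (h₁₁ : mink W₁ W₁ = 1) (h₂₂ : mink W₂ W₂ = 1) (h₁₂ : mink W₁ W₂ = 0)
    (hv₁ : mink v W₁ = 0) (hv₂ : mink v W₂ = 0)
    (hT₁ : mink T W₁ = 0) (hT₂ : mink T W₂ = 0)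
    (h : a • W₁ + b • W₂ + v = r • T) :
    a = 0 ∧ b = 0 := by
  have p₁ := congrArg (mink · W₁) h
  have p₂ := congrArg (mink · W₂) h
  simp only [mink_add_left, mink_smul_left, mink_comm W₂ W₁, h₁₁, h₂₂, h₁₂, hv₁, hv₂,
    hT₁, hT₂, mul_zero] at p₁ p₂
  constructor <;> linarith

theorem stmt5_general (c c' L N W₁ W₂ L' W₁' W₂' : ℝ → (Fin 4 → ℝ)) (k₁ k₂ : ℝ → ℝ)
    (α β θ φ : ℝ → ℝ)
    (hα : Differentiable ℝ α) (hβ : Differentiable ℝ β)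
    (hW₁d : Differentiable ℝ W₁) (hW₂d : Differentiable ℝ W₂)
    -- Cartan–Frenet equations of c:
    (hcL : ∀ s, deriv c s = L s)
    (hW₁fr : ∀ s, deriv W₁ s = -(k₁ s) • L s - N s)
    (hW₂fr : ∀ s, deriv W₂ s = -(k₂ s) • L s)
    -- pseudo-orthonormality of the frame of c:
    (hLN : ∀ s, mink (L s) (N s) = 1)
    (hW₁W₁ : ∀ s, mink (W₁ s) (W₁ s) = 1) (hW₂W₂ : ∀ s, mink (W₂ s) (W₂ s) = 1)
    (hW₁W₂ : ∀ s, mink (W₁ s) (W₂ s) = 0)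
    (hLW₁ : ∀ s, mink (L s) (W₁ s) = 0) (hLW₂ : ∀ s, mink (L s) (W₂ s) = 0)
    (hNW₁ : ∀ s, mink (N s) (W₁ s) = 0) (hNW₂ : ∀ s, mink (N s) (W₂ s) = 0)
    -- the mate: c̄(φ(s)) = c(s) + α(s) W₁(s) + β(s) W₂(s), with dc̄/ds = (ds̄/ds) L̄:
    (hpair : ∀ s, c' (φ s) = c s + α s • W₁ s + β s • W₂ s)
    (hmate : ∀ s, deriv (fun t => c' (φ t)) s = deriv φ s • L' (φ s))
    -- the (1,2)-normal planes coincide: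
    (hW₁'rot : ∀ s, W₁' (φ s) = Real.cos (θ s) • W₁ s + Real.sin (θ s) • W₂ s)
    (hW₂'rot : ∀ s, W₂' (φ s) = -Real.sin (θ s) • W₁ s + Real.cos (θ s) • W₂ s)
    -- orthogonality of the mate frame:
    (hL'W₁' : ∀ x, mink (L' x) (W₁' x) = 0)
    (hL'W₂' : ∀ x, mink (L' x) (W₂' x) = 0) :
    (∀ s, deriv α s = 0) ∧ (∀ s, deriv β s = 0) := by
  suffices h : ∀ s, deriv α s = 0 ∧ deriv β s = 0 from ⟨fun s => (h s).1, fun s => (h s).2⟩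
  intro s
  -- `c` is differentiable because its derivative `L` pairs to `1` with `N`, so is nonzero.
  have hc_ne : deriv c s ≠ 0 := fun h0 => by simpa [← hcL, h0, mink] using hLN s
  have hc : HasDerivAt c (L s) s :=
    hcL s ▸ (differentiableAt_of_deriv_ne_zero hc_ne).hasDerivAt
  have hderiv : HasDerivAt (fun t => c' (φ t))
      (L s + (α s • deriv W₁ s + deriv α s • W₁ s) + (β s • deriv W₂ s + deriv β s • W₂ s)) s := by
    simp only [hpair]
    exact (hc.add ((hα s).hasDerivAt.smul (hW₁d s).hasDerivAt)).add
      ((hβ s).hasDerivAt.smul (hW₂d s).hasDerivAt)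
  rw [hW₁fr, hW₂fr] at hderiv
  set v := L s + α s • (-(k₁ s) • L s - N s) + β s • (-(k₂ s) • L s)
  have hv₁ : mink v (W₁ s) = 0 := by
    simp only [v, mink_add_left, mink_sub_left, mink_smul_left, hLW₁, hNW₁]; ring
  have hv₂ : mink v (W₂ s) = 0 := by
    simp only [v, mink_add_left, mink_sub_left, mink_smul_left, hLW₂, hNW₂]; ring
  have hsplit : deriv α s • W₁ s + deriv β s • W₂ s + v = deriv φ s • L' (φ s) := by
    rw [← hmate, hderiv.deriv]; simp only [v]; abel
  have hL'W := mink_eq_zero_of_mink_rotate_eq_zero (θ s)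
    (hW₁'rot s ▸ hL'W₁' (φ s)) (hW₂'rot s ▸ hL'W₂' (φ s))
  exact coeffs_eq_zero_of_mink_orthonormal (hW₁W₁ s) (hW₂W₂ s) (hW₁W₂ s) hv₁ hv₂
    hL'W.1 hL'W.2 hsplit

/-- If `c̄(φ(s)) = c(s) + α(s) W₁(s) + β(s) W₂(s)` and the plane
spanned by `{W̄₁, W̄₂}` coincides with that spanned by `{W₁, W₂}`, so that
`W̄₁ = cos θ W₁ + sin θ W₂` and `W̄₂ = -sin θ W₁ + cos θ W₂`, then `α` and `β`
are constant functions. -/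
theorem stmt5 (c c' L N W₁ W₂ L' W₁' W₂' : ℝ → (Fin 4 → ℝ)) (k₁ k₂ : ℝ → ℝ)
    (α β θ φ : ℝ → ℝ)
    (hα : Differentiable ℝ α) (hβ : Differentiable ℝ β)
    (hW₁d : Differentiable ℝ W₁) (hW₂d : Differentiable ℝ W₂)
    (hφreg : ∀ s, deriv φ s ≠ 0)
    -- Cartan–Frenet equations of c:
    (hcL : ∀ s, deriv c s = L s)
    (hLfr : ∀ s, deriv L s = W₁ s)
    (hNfr : ∀ s, deriv N s = k₁ s • W₁ s + k₂ s • W₂ s)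
    (hW₁fr : ∀ s, deriv W₁ s = -(k₁ s) • L s - N s)
    (hW₂fr : ∀ s, deriv W₂ s = -(k₂ s) • L s)
    -- pseudo-orthonormality of the frame of c:
    (hLL : ∀ s, mink (L s) (L s) = 0) (hNN : ∀ s, mink (N s) (N s) = 0)
    (hLN : ∀ s, mink (L s) (N s) = 1)
    (hW₁W₁ : ∀ s, mink (W₁ s) (W₁ s) = 1) (hW₂W₂ : ∀ s, mink (W₂ s) (W₂ s) = 1)
    (hW₁W₂ : ∀ s, mink (W₁ s) (W₂ s) = 0)
    (hLW₁ : ∀ s, mink (L s) (W₁ s) = 0) (hLW₂ : ∀ s, mink (L s) (W₂ s) = 0)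
    (hNW₁ : ∀ s, mink (N s) (W₁ s) = 0) (hNW₂ : ∀ s, mink (N s) (W₂ s) = 0)
    -- the mate: c̄(φ(s)) = c(s) + α(s) W₁(s) + β(s) W₂(s), with dc̄/ds = (ds̄/ds) L̄:
    (hpair : ∀ s, c' (φ s) = c s + α s • W₁ s + β s • W₂ s)
    (hmate : ∀ s, deriv (fun t => c' (φ t)) s = deriv φ s • L' (φ s))
    -- the (1,2)-normal planes coincide:
    (hW₁'rot : ∀ s, W₁' (φ s) = Real.cos (θ s) • W₁ s + Real.sin (θ s) • W₂ s)
    (hW₂'rot : ∀ s, W₂' (φ s) = -Real.sin (θ s) • W₁ s + Real.cos (θ s) • W₂ s)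
    -- orthogonality of the mate frame:
    (hL'W₁' : ∀ x, mink (L' x) (W₁' x) = 0)
    (hL'W₂' : ∀ x, mink (L' x) (W₂' x) = 0) :
    (∀ s, deriv α s = 0) ∧ (∀ s, deriv β s = 0) :=
  stmt5_general c c' L N W₁ W₂ L' W₁' W₂' k₁ k₂ α β θ φ hα hβ hW₁d hW₂d hcL hW₁fr hW₂fr hLN hW₁W₁
    hW₂W₂ hW₁W₂ hLW₁ hLW₂ hNW₁ hNW₂ hpair hmate hW₁'rot hW₂'rot hL'W₁' hL'W₂'
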